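/- arXiv:1309.6478 — 3 statements merged into one kernel-verified Lean document; each statement's English description precedes it below -/
import Mathlib

section
/- Let r, T > 0, α ∈ (0,1), d ∈ ℕ, and let X : [−r,T] → ℝ^d satisfy ‖X‖_{1−α,−r,T} < ∞. Then for all t, τ ∈ [0,T], the segments X_t, X_τ : [−r,0] → ℝ^d satisfy ‖X_t − X_τ‖_{1−α,−r,0} ≤ 2 ‖X‖_{1−α,|t−τ|^{1/2},−r,T} + (2 |t−τ|^{(1−α)/2} + |t−τ|^{1−α}) ‖X‖_{1−α,−r,T}. -/
open Set Filter

noncomputable section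

variable {E : Type*} [NormedAddCommGroup E]

/-- Set of `β`-Hölder difference quotients of `f` over the interval `[a,b]`. -/
def ratioSet (β a b : ℝ) (f : ℝ → E) : Set ℝ :=
  {c | ∃ s t : ℝ, a ≤ s ∧ s < t ∧ t ≤ b ∧ c = ‖f t - f s‖ / (t - s) ^ β}

/-- Set of `β`-Hölder difference quotients of `f` over `[a,b]` with gap less than `δ`. -/
def ratioSetD (β δ a b : ℝ) (f : ℝ → E) : Set ℝ :=
  {c | ∃ s t : ℝ, a ≤ s ∧ s < t ∧ t ≤ b ∧ t - s < δ ∧ c = ‖f t - f s‖ / (t - s) ^ β}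

/-- The `β`-Hölder seminorm `[f]_{β,a,b}` of `f` on `[a,b]`. -/
def hSemi (β a b : ℝ) (f : ℝ → E) : ℝ := sSup (ratioSet β a b f)

/-- The `δ`-restricted `β`-Hölder seminorm `‖f‖_{β,δ,a,b}`. -/
def hSemiD (β δ a b : ℝ) (f : ℝ → E) : ℝ := sSup (ratioSetD β δ a b f)

/-- The sup norm of `f` on `[a,b]`. -/
def hSup (a b : ℝ) (f : ℝ → E) : ℝ := sSup ((fun t => ‖f t‖) '' Icc a b)

/-- The `β`-Hölder norm `‖f‖_{β,a,b} = sup norm + Hölder seminorm`. -/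
def hNorm (β a b : ℝ) (f : ℝ → E) : ℝ := hSup a b f + hSemi β a b f

/-- `f` has finite `β`-Hölder norm on `[a,b]`. -/
def HolderFinite (β a b : ℝ) (f : ℝ → E) : Prop :=
  BddAbove ((fun t => ‖f t‖) '' Icc a b) ∧ BddAbove (ratioSet β a b f)

/-- `f` belongs to the little Hölder space `C^{0,β}([a,b],E)`: finite Hölder norm and
`‖f‖_{β,δ,a,b} → 0` as `δ → 0⁺`. -/
def MemLittleHolder (β a b : ℝ) (f : ℝ → E) : Prop :=
  HolderFinite β a b f ∧
    Tendsto (fun δ => hSemiD β δ a b f) (nhdsWithin 0 (Ioi 0)) (nhds 0)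

lemma hSemi_nonneg' {β a b : ℝ} {f : ℝ → E} (hab : a < b)
    (hb : BddAbove (ratioSet β a b f)) : 0 ≤ hSemi β a b f := by
  have hm : ‖f b - f a‖ / (b - a) ^ β ∈ ratioSet β a b f :=
    ⟨a, b, le_refl _, hab, le_refl _, rfl⟩
  exact le_trans (div_nonneg (norm_nonneg _) (Real.rpow_nonneg (by linarith) _))
    (le_csSup hb hm)

lemma norm_sub_le_hSemi {β a b : ℝ} {f : ℝ → E} (hb : BddAbove (ratioSet β a b f))
    {x y : ℝ} (hx : x ∈ Icc a b) (hy : y ∈ Icc a b) (hlt : y < x) :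
    ‖f x - f y‖ ≤ hSemi β a b f * (x - y) ^ β := by
  have hm : ‖f x - f y‖ / (x - y) ^ β ∈ ratioSet β a b f :=
    ⟨y, x, hy.1, hlt, hx.2, rfl⟩
  have h1 := le_csSup hb hm
  have hp : (0:ℝ) < (x - y) ^ β := Real.rpow_pos_of_pos (by linarith) β
  rw [div_le_iff₀ hp] at h1
  exact h1

lemma norm_sub_le_hSemi' {β a b : ℝ} {f : ℝ → E} (hb : BddAbove (ratioSet β a b f))
    {x y : ℝ} (hx : x ∈ Icc a b) (hy : y ∈ Icc a b) (hne : x ≠ y) :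
    ‖f x - f y‖ ≤ hSemi β a b f * |x - y| ^ β := by
  rcases hne.lt_or_gt with h | h
  · have habs : |x - y| = y - x := by rw [abs_sub_comm]; exact abs_of_pos (by linarith)
    rw [norm_sub_rev, habs]
    exact norm_sub_le_hSemi hb hy hx h
  · have habs : |x - y| = x - y := abs_of_pos (by linarith)
    rw [habs]
    exact norm_sub_le_hSemi hb hx hy h

lemma norm_sub_le_hSemiD {β δ a b : ℝ} {f : ℝ → E} (hb : BddAbove (ratioSetD β δ a b f))
    {x y : ℝ} (hx : x ∈ Icc a b) (hy : y ∈ Icc a b) (hlt : y < x) (hd : x - y < δ) :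
    ‖f x - f y‖ ≤ hSemiD β δ a b f * (x - y) ^ β := by
  have hm : ‖f x - f y‖ / (x - y) ^ β ∈ ratioSetD β δ a b f :=
    ⟨y, x, hy.1, hlt, hx.2, hd, rfl⟩
  have h1 := le_csSup hb hm
  have hp : (0:ℝ) < (x - y) ^ β := Real.rpow_pos_of_pos (by linarith) β
  rw [div_le_iff₀ hp] at h1
  exact h1

theorem stmt6 (r T α : ℝ) (d : ℕ) (hr : 0 < r) (hT : 0 < T) (hα : α ∈ Ioo (0:ℝ) 1)
    (X : ℝ → EuclideanSpace ℝ (Fin d)) (hX : HolderFinite (1 - α) (-r) T X) :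
    ∀ t τ : ℝ, t ∈ Icc (0:ℝ) T → τ ∈ Icc (0:ℝ) T →
      hNorm (1 - α) (-r) 0 (fun s => X (t + s) - X (τ + s)) ≤
        2 * hSemiD (1 - α) (|t - τ| ^ ((1:ℝ)/2)) (-r) T X +
          (2 * |t - τ| ^ ((1 - α)/2) + |t - τ| ^ (1 - α)) * hNorm (1 - α) (-r) T X := by
  obtain ⟨hα0, hα1⟩ := hα
  have hβ0 : (0:ℝ) < 1 - α := by linarith
  intro t τ ht hτ
  obtain ⟨hbS, hbR⟩ := hX
  rcases eq_or_ne t τ with heq | hne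
  · -- t = τ : both sides vanish
    subst heq
    have h0 : |t - t| = 0 := by simp
    rw [h0]
    have hz1 : (0:ℝ) ^ ((1:ℝ)/2) = 0 := Real.zero_rpow (by norm_num)
    have hz2 : (0:ℝ) ^ ((1 - α)/2) = 0 := Real.zero_rpow (by positivity)
    have hz3 : (0:ℝ) ^ (1 - α) = 0 := Real.zero_rpow (by positivity)
    rw [hz1, hz2, hz3]
    have hD : ratioSetD (1 - α) (0:ℝ) (-r) T X = ∅ := by
      rw [eq_empty_iff_forall_notMem]
      rintro c ⟨s, u, _, h2, _, h4, _⟩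
      linarith
    have hSupz : hSup (-r) 0 (fun s => X (t + s) - X (t + s)) = 0 := by
      unfold hSup
      simp only [sub_self, norm_zero]
      rw [Set.Nonempty.image_const (nonempty_Icc.mpr (by linarith)) 0]
      exact csSup_singleton 0
    have hSemz : hSemi (1 - α) (-r) 0 (fun s => X (t + s) - X (t + s)) = 0 := by
      unfold hSemi
      have hset : ratioSet (1 - α) (-r) 0 (fun s => X (t + s) - X (t + s)) = {0} := by
        ext c
        simp only [ratioSet, mem_setOf_eq, mem_singleton_iff]
        constructor
        · rintro ⟨s, u, _, _, _, rfl⟩; simp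
        · rintro rfl
          exact ⟨-r, 0, le_refl _, by linarith, le_refl _, by simp⟩
      rw [hset]
      exact csSup_singleton 0
    unfold hNorm
    rw [hSupz, hSemz]
    unfold hSemiD
    rw [hD, Real.sSup_empty]
    norm_num
  · -- t ≠ τ
    set A := |t - τ| with hAdef
    have hA : 0 < A := abs_pos.mpr (sub_ne_zero.mpr hne)
    set δ := A ^ ((1:ℝ)/2) with hδdef
    have hδpos : 0 < δ := Real.rpow_pos_of_pos hA _
    have hδδ : δ * δ = A := by
      rw [hδdef, ← Real.rpow_add hA]; norm_num
    have hAβ : A ^ (1 - α) = δ ^ (1 - α) * δ ^ (1 - α) := by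
      rw [← Real.mul_rpow hδpos.le hδpos.le, hδδ]
    have hδβA : δ ^ (1 - α) = A ^ ((1 - α)/2) := by
      rw [hδdef, ← Real.rpow_mul hA.le]
      congr 1
      ring
    -- bounds and nonnegativity
    have hsubD : ratioSetD (1 - α) δ (-r) T X ⊆ ratioSet (1 - α) (-r) T X := by
      rintro c ⟨s, u, h1, h2, h3, _, h5⟩
      exact ⟨s, u, h1, h2, h3, h5⟩
    have hbD : BddAbove (ratioSetD (1 - α) δ (-r) T X) := hbR.mono hsubD
    have hXnn : 0 ≤ hSemi (1 - α) (-r) T X := hSemi_nonneg' (by linarith) hbR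
    have hDnn : 0 ≤ hSemiD (1 - α) δ (-r) T X := by
      set u : ℝ := -r + min δ (r + T) / 2 with hudef
      have hmin : 0 < min δ (r + T) := lt_min hδpos (by linarith)
      have h1 : -r < u := by
        rw [hudef]; linarith
      have h2 : u ≤ T := by
        have : min δ (r + T) ≤ r + T := min_le_right _ _
        rw [hudef]; linarith
      have h3 : u - (-r) < δ := by
        have : min δ (r + T) ≤ δ := min_le_left _ _
        rw [hudef]; linarith
      have hm : ‖X u - X (-r)‖ / (u - (-r)) ^ (1 - α) ∈ ratioSetD (1 - α) δ (-r) T X :=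
        ⟨-r, u, le_refl _, h1, h2, h3, rfl⟩
      exact le_trans (div_nonneg (norm_nonneg _) (Real.rpow_nonneg (by linarith) _))
        (le_csSup hbD hm)
    have hSupXnn : 0 ≤ hSup (-r) T X := by
      have hm : ‖X (-r)‖ ∈ (fun t => ‖X t‖) '' Icc (-r) T :=
        ⟨-r, ⟨le_refl _, by linarith⟩, rfl⟩
      exact le_trans (norm_nonneg _) (le_csSup hbS hm)
    clear_value δ A
    -- memberships of shifted points
    have hmem : ∀ σ : ℝ, σ ∈ Icc (0:ℝ) T → ∀ s : ℝ, -r ≤ s → s ≤ 0 → σ + s ∈ Icc (-r) T := by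
      intro σ hσ s hs1 hs2
      exact ⟨by have := hσ.1; linarith, by have := hσ.2; linarith⟩
    -- Step 1 : sup part
    have hsup_g : hSup (-r) 0 (fun s => X (t + s) - X (τ + s)) ≤
        hSemi (1 - α) (-r) T X * A ^ (1 - α) := by
      apply csSup_le
      · exact Set.Nonempty.image _ ⟨0, by constructor <;> linarith⟩
      · rintro y ⟨s, hs, rfl⟩
        have hts : t + s ≠ τ + s := by
          intro hcon; exact hne (by linarith)
        have h1 := norm_sub_le_hSemi' hbR (hmem t ht s hs.1 hs.2)
          (hmem τ hτ s hs.1 hs.2) hts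
        have heq2 : |t + s - (τ + s)| = A := by rw [hAdef]; ring_nf
        rw [heq2] at h1
        exact h1
    -- Step 2 : seminorm part
    have hsemi_g : hSemi (1 - α) (-r) 0 (fun s => X (t + s) - X (τ + s)) ≤
        2 * hSemiD (1 - α) δ (-r) T X + 2 * δ ^ (1 - α) * hSemi (1 - α) (-r) T X := by
      apply csSup_le
      · exact ⟨_, -r, 0, le_refl _, by linarith, le_refl _, rfl⟩
      · rintro c ⟨s, u, hs, hsu, hu, rfl⟩
        have hv : 0 < u - s := by linarith
        have hvβ : (0:ℝ) < (u - s) ^ (1 - α) := Real.rpow_pos_of_pos hv _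
        show ‖(X (t + u) - X (τ + u)) - (X (t + s) - X (τ + s))‖ / (u - s) ^ (1 - α) ≤ _
        rw [div_le_iff₀ hvβ]
        by_cases hcase : u - s < δ
        · -- small gap : use restricted seminorm
          have e1 : t + u - (t + s) = u - s := by ring
          have e2 : τ + u - (τ + s) = u - s := by ring
          have h1 := norm_sub_le_hSemiD hbD (hmem t ht u (by linarith) hu)
            (hmem t ht s hs (by linarith)) (by linarith) (by rw [e1]; exact hcase)
          have h2 := norm_sub_le_hSemiD hbD (hmem τ hτ u (by linarith) hu)
            (hmem τ hτ s hs (by linarith)) (by linarith) (by rw [e2]; exact hcase)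
          rw [e1] at h1
          rw [e2] at h2
          have hre : (X (t + u) - X (τ + u)) - (X (t + s) - X (τ + s)) =
              (X (t + u) - X (t + s)) - (X (τ + u) - X (τ + s)) := by abel
          have hb3 := norm_sub_le (X (t + u) - X (t + s)) (X (τ + u) - X (τ + s))
          rw [← hre] at hb3
          have hδβnn : (0:ℝ) ≤ δ ^ (1 - α) := Real.rpow_nonneg hδpos.le _
          have h4 : (2 * hSemiD (1 - α) δ (-r) T X +
              2 * δ ^ (1 - α) * hSemi (1 - α) (-r) T X) * (u - s) ^ (1 - α) =
              2 * (hSemiD (1 - α) δ (-r) T X * (u - s) ^ (1 - α)) +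
              2 * (δ ^ (1 - α) * hSemi (1 - α) (-r) T X * (u - s) ^ (1 - α)) := by ring
          rw [h4]
          linarith [mul_nonneg (mul_nonneg hδβnn hXnn) hvβ.le]
        · -- large gap : use global seminorm
          push_neg at hcase
          have hts : t + u ≠ τ + u := fun hcon => hne (by linarith)
          have hts' : t + s ≠ τ + s := fun hcon => hne (by linarith)
          have h1 := norm_sub_le_hSemi' hbR (hmem t ht u (by linarith) hu)
            (hmem τ hτ u (by linarith) hu) hts
          have h2 := norm_sub_le_hSemi' hbR (hmem t ht s hs (by linarith))
            (hmem τ hτ s hs (by linarith)) hts'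
          have e1 : |t + u - (τ + u)| = A := by rw [hAdef]; ring_nf
          have e2 : |t + s - (τ + s)| = A := by rw [hAdef]; ring_nf
          rw [e1] at h1
          rw [e2] at h2
          have hb3 := norm_sub_le (X (t + u) - X (τ + u)) (X (t + s) - X (τ + s))
          have hδβnn : (0:ℝ) ≤ δ ^ (1 - α) := Real.rpow_nonneg hδpos.le _
          have hpow : δ ^ (1 - α) ≤ (u - s) ^ (1 - α) :=
            Real.rpow_le_rpow hδpos.le hcase (by linarith)
          have key : hSemi (1 - α) (-r) T X * A ^ (1 - α) ≤
              hSemi (1 - α) (-r) T X * δ ^ (1 - α) * (u - s) ^ (1 - α) := by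
            rw [hAβ, ← mul_assoc]
            exact mul_le_mul_of_nonneg_left hpow (mul_nonneg hXnn hδβnn)
          have h4 : (2 * hSemiD (1 - α) δ (-r) T X +
              2 * δ ^ (1 - α) * hSemi (1 - α) (-r) T X) * (u - s) ^ (1 - α) =
              2 * (hSemiD (1 - α) δ (-r) T X * (u - s) ^ (1 - α)) +
              2 * (hSemi (1 - α) (-r) T X * δ ^ (1 - α) * (u - s) ^ (1 - α)) := by ring
          rw [h4]
          linarith [mul_nonneg hDnn hvβ.le, key]
    -- combine
    have hAβnn : (0:ℝ) ≤ A ^ (1 - α) := Real.rpow_nonneg hA.le _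
    have hδβnn : (0:ℝ) ≤ δ ^ (1 - α) := Real.rpow_nonneg hδpos.le _
    unfold hNorm
    rw [← hδβA]
    have h5 : (2 * δ ^ (1 - α) + A ^ (1 - α)) * (hSup (-r) T X + hSemi (1 - α) (-r) T X) =
        2 * (δ ^ (1 - α) * hSup (-r) T X) + 2 * (δ ^ (1 - α) * hSemi (1 - α) (-r) T X) +
        A ^ (1 - α) * hSup (-r) T X + hSemi (1 - α) (-r) T X * A ^ (1 - α) := by ring
    rw [h5]
    linarith [hsup_g, hsemi_g, mul_nonneg hδβnn hSupXnn, mul_nonneg hAβnn hSupXnn]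

end
end

section
/- Let r, T > 0, α ∈ (0,1), d ∈ ℕ, and let X ∈ C^{0,1−α}([−r,T],ℝ^d). Then the segment map τ ↦ X_τ from [0,T] into the space of (1−α)-Hölder continuous functions on [−r,0] equipped with the Hölder norm ‖·‖_{1−α,−r,0} is continuous; that is, for every τ ∈ [0,T], ‖X_t − X_τ‖_{1−α,−r,0} → 0 as t → τ in [0,T]. -/
open Set Filter

noncomputable section

variable {E : Type*} [NormedAddCommGroup E]

/-!
If `|t - τ| < δ ≤ 1` and `M` is the `δ`-restricted `(1-α)`-Hölder seminorm of `X`, then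
`g = X (t + ·) - X (τ + ·)` satisfies `‖g‖_∞ ≤ M |t - τ|^(1-α) ≤ M`, and every increment
of `g` over a gap `h` is at most `2 M h^(1-α)`: for `h ≤ |t - τ|` compare the two shifts of `X`
separately, for `h > |t - τ|` compare them at each endpoint. Hence `‖g‖_{1-α} ≤ 3 M`, and
`M → 0` as `δ → 0` by the little Hölder hypothesis.
-/

lemma ratioSetD_subset_ratioSet (β δ a b : ℝ) (f : ℝ → E) :
    ratioSetD β δ a b f ⊆ ratioSet β a b f := by
  rintro c ⟨s, t, has, hst, htb, -, rfl⟩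
  exact ⟨s, t, has, hst, htb, rfl⟩

lemma hSemiD_nonneg (β δ a b : ℝ) (f : ℝ → E) : 0 ≤ hSemiD β δ a b f := by
  refine Real.sSup_nonneg ?_
  rintro c ⟨s, t, -, hst, -, -, rfl⟩
  exact div_nonneg (norm_nonneg _) (Real.rpow_nonneg (sub_pos.2 hst).le β)

lemma hNorm_nonneg (β a b : ℝ) (f : ℝ → E) : 0 ≤ hNorm β a b f := by
  refine add_nonneg (Real.sSup_nonneg ?_) (Real.sSup_nonneg ?_)
  · rintro x ⟨s, -, rfl⟩
    exact norm_nonneg _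
  · rintro c ⟨s, t, -, hst, -, rfl⟩
    exact div_nonneg (norm_nonneg _) (Real.rpow_nonneg (sub_pos.2 hst).le β)

lemma hNorm_le {β a b A B : ℝ} {g : ℝ → E} (hA : 0 ≤ A) (hB : 0 ≤ B)
    (hsup : ∀ s ∈ Icc a b, ‖g s‖ ≤ A)
    (hinc : ∀ s u, a ≤ s → s < u → u ≤ b → ‖g u - g s‖ ≤ B * (u - s) ^ β) :
    hNorm β a b g ≤ A + B := by
  refine add_le_add (Real.sSup_le ?_ hA) (Real.sSup_le ?_ hB)
  · rintro x ⟨s, hs, rfl⟩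
    exact hsup s hs
  · rintro c ⟨s, u, has, hsu, hub, rfl⟩
    exact div_le_of_le_mul₀ (Real.rpow_nonneg (sub_pos.2 hsu).le β) hB
      (hinc s u has hsu hub)

lemma norm_sub_le_hSemiD_mul {β δ a b : ℝ} {f : ℝ → E} (hbdd : BddAbove (ratioSet β a b f))
    {u v : ℝ} (hu : u ∈ Icc a b) (hv : v ∈ Icc a b) (huv : |v - u| < δ) :
    ‖f v - f u‖ ≤ hSemiD β δ a b f * |v - u| ^ β := by
  wlog h : u ≤ v generalizing u v
  · rw [norm_sub_rev, abs_sub_comm] at *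
    exact this hv hu huv (le_of_not_ge h)
  rcases h.eq_or_lt with rfl | hlt
  · simpa using mul_nonneg (hSemiD_nonneg β δ a b f) (Real.rpow_nonneg le_rfl β)
  rw [abs_of_pos (sub_pos.2 hlt)] at huv ⊢
  have hmem : ‖f v - f u‖ / (v - u) ^ β ∈ ratioSetD β δ a b f :=
    ⟨u, v, hu.1, hlt, hv.2, huv, rfl⟩
  exact (div_le_iff₀ (Real.rpow_pos_of_pos (sub_pos.2 hlt) β)).1
    (le_csSup (hbdd.mono (ratioSetD_subset_ratioSet β δ a b f)) hmem)

section Segment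

variable {β δ a b c e t τ : ℝ} {f : ℝ → E}
  (hbdd : BddAbove (ratioSet β a b f))
  (ht : ∀ s ∈ Icc c e, t + s ∈ Icc a b) (hτ : ∀ s ∈ Icc c e, τ + s ∈ Icc a b)
  (htτ : |t - τ| < δ)
include hbdd ht hτ htτ

lemma norm_shift_sub_le {s : ℝ} (hs : s ∈ Icc c e) :
    ‖f (t + s) - f (τ + s)‖ ≤ hSemiD β δ a b f * |t - τ| ^ β := by
  have := norm_sub_le_hSemiD_mul hbdd (hτ s hs) (ht s hs)
    (by rwa [add_sub_add_right_eq_sub])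
  rwa [add_sub_add_right_eq_sub] at this

lemma norm_shift_sub_sub_le (hβ : 0 ≤ β) {s u : ℝ} (hcs : c ≤ s) (hsu : s < u)
    (hue : u ≤ e) :
    ‖(f (t + u) - f (τ + u)) - (f (t + s) - f (τ + s))‖
      ≤ 2 * hSemiD β δ a b f * (u - s) ^ β := by
  have hs : s ∈ Icc c e := ⟨hcs, hsu.le.trans hue⟩
  have hu : u ∈ Icc c e := ⟨hcs.trans hsu.le, hue⟩
  have hM := hSemiD_nonneg β δ a b f
  rcases le_or_gt (u - s) |t - τ| with hshort | hlong
  · have hgap : ∀ x, |(x + u) - (x + s)| = u - s := fun x => by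
      rw [add_sub_add_left_eq_sub, abs_of_pos (sub_pos.2 hsu)]
    have hgap_lt : ∀ x, |(x + u) - (x + s)| < δ := fun x =>
      (hgap x).trans_lt (hshort.trans_lt htτ)
    have et := norm_sub_le_hSemiD_mul hbdd (ht s hs) (ht u hu) (hgap_lt t)
    have eτ := norm_sub_le_hSemiD_mul hbdd (hτ s hs) (hτ u hu) (hgap_lt τ)
    rw [hgap] at et eτ
    calc _ = ‖(f (t + u) - f (t + s)) - (f (τ + u) - f (τ + s))‖ := by congr 1; abel
      _ ≤ ‖f (t + u) - f (t + s)‖ + ‖f (τ + u) - f (τ + s)‖ := norm_sub_le _ _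
      _ ≤ _ := by linarith
  · have hpow : |t - τ| ^ β ≤ (u - s) ^ β := Real.rpow_le_rpow (abs_nonneg _) hlong.le hβ
    calc _ ≤ ‖f (t + u) - f (τ + u)‖ + ‖f (t + s) - f (τ + s)‖ := norm_sub_le _ _
      _ ≤ hSemiD β δ a b f * |t - τ| ^ β + hSemiD β δ a b f * |t - τ| ^ β :=
          add_le_add (norm_shift_sub_le hbdd ht hτ htτ hu)
            (norm_shift_sub_le hbdd ht hτ htτ hs)
      _ ≤ _ := by nlinarith [mul_le_mul_of_nonneg_left hpow hM]

lemma hNorm_shift_sub_le (hβ : 0 ≤ β) (hδ : δ ≤ 1) :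
    hNorm β c e (fun s => f (t + s) - f (τ + s)) ≤ 3 * hSemiD β δ a b f := by
  have hM := hSemiD_nonneg β δ a b f
  have hpow : |t - τ| ^ β ≤ 1 := Real.rpow_le_one (abs_nonneg _) (by linarith) hβ
  have hsup : ∀ s ∈ Icc c e, ‖f (t + s) - f (τ + s)‖ ≤ hSemiD β δ a b f := fun s hs =>
    (norm_shift_sub_le hbdd ht hτ htτ hs).trans (mul_le_of_le_one_right hM hpow)
  linarith [hNorm_le hM (by positivity) hsup fun s u hcs hsu hue =>
    norm_shift_sub_sub_le hbdd ht hτ htτ hβ hcs hsu hue]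

end Segment

theorem stmt7_general (r T α : ℝ) (d : ℕ) (hα : α ∈ Ioo (0:ℝ) 1)
    (X : ℝ → EuclideanSpace ℝ (Fin d)) (hX : MemLittleHolder (1 - α) (-r) T X) :
    ∀ τ ∈ Icc (0:ℝ) T,
      Tendsto (fun t => hNorm (1 - α) (-r) 0 (fun s => X (t + s) - X (τ + s)))
        (nhdsWithin τ (Icc 0 T)) (nhds 0) := by
  intro τ hτ
  have hβ : 0 ≤ 1 - α := by linarith [hα.2]
  have hseg : ∀ t ∈ Icc (0:ℝ) T, ∀ s ∈ Icc (-r) 0, t + s ∈ Icc (-r) T := fun t ht s hs =>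
    ⟨by linarith [ht.1, hs.1], by linarith [ht.2, hs.2]⟩
  rw [Metric.tendsto_nhdsWithin_nhds]
  intro ε hε
  obtain ⟨δ, ⟨hδ0, hδ1⟩, hδε⟩ : ∃ δ, δ ∈ Ioc 0 1 ∧ hSemiD (1 - α) δ (-r) T X < ε / 3 :=
    (Eventually.and (Ioc_mem_nhdsGT one_pos)
      (hX.2.eventually (gt_mem_nhds (by positivity)))).exists
  refine ⟨δ, hδ0, fun t ht htτ => ?_⟩
  rw [Real.dist_eq] at htτ
  rw [Real.dist_eq, sub_zero, abs_of_nonneg (hNorm_nonneg _ _ _ _)]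
  linarith [hNorm_shift_sub_le hX.1.2 (hseg t ht) (hseg τ hτ) htτ hβ hδ1]

theorem stmt7 (r T α : ℝ) (d : ℕ) (hr : 0 < r) (hT : 0 < T) (hα : α ∈ Ioo (0:ℝ) 1)
    (X : ℝ → EuclideanSpace ℝ (Fin d)) (hX : MemLittleHolder (1 - α) (-r) T X) :
    ∀ τ ∈ Icc (0:ℝ) T,
      Tendsto (fun t => hNorm (1 - α) (-r) 0 (fun s => X (t + s) - X (τ + s)))
        (nhdsWithin τ (Icc 0 T)) (nhds 0) :=
  stmt7_general r T α d hα X hX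

end
end

section
/- Let α ∈ (0,1) and define X : [−1,1] → ℝ by X(t) := |t|^{1−α} for t ∈ [−1,0] and X(t) := 0 for t ∈ [0,1]. Then for all t, τ ∈ [0,1] with t ≠ τ, the segments X_t, X_τ : [−1,0] → ℝ satisfy ‖X_t − X_τ‖_{1−α,−1,0} ≥ [X_t − X_τ]_{1−α,−1,0} ≥ 1. Consequently, the segment map τ ↦ X_τ from [0,1] into the (1−α)-Hölder continuous functions on [−1,0] with the Hölder norm is discontinuous at every point τ ∈ [0,1]. -/
open Set Filter

noncomputable section

variable {E : Type*} [NormedAddCommGroup E]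

/-- The function `X(t) = |t|^{1-α}` for `t ≤ 0` and `X(t) = 0` for `t ≥ 0`. -/
def Xex (α : ℝ) : ℝ → ℝ := fun t => if t ≤ 0 then |t| ^ (1 - α) else 0

-- auxiliary lemmas


lemma my_rpow_add_le {β x y : ℝ} (hβ0 : 0 ≤ β) (hβ1 : β ≤ 1) (hx : 0 ≤ x) (hy : 0 ≤ y) :
    (x + y) ^ β ≤ x ^ β + y ^ β := by
  lift x to NNReal using hx
  lift y to NNReal using hy
  have := NNReal.rpow_add_le_add_rpow x y hβ0 hβ1
  exact_mod_cast this

lemma my_rpow_sub_abs {β x y : ℝ} (hβ0 : 0 ≤ β) (hβ1 : β ≤ 1) (hx : 0 ≤ x) (hy : 0 ≤ y) :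
    |x ^ β - y ^ β| ≤ |x - y| ^ β := by
  wlog h : y ≤ x generalizing x y
  · rw [abs_sub_comm, abs_sub_comm x y]; exact this hy hx (le_of_not_ge h)
  rw [abs_of_nonneg (sub_nonneg.2 (Real.rpow_le_rpow hy h hβ0)),
    abs_of_nonneg (sub_nonneg.2 h)]
  have h1 : x ^ β ≤ y ^ β + (x - y) ^ β := by
    have := my_rpow_add_le hβ0 hβ1 hy (sub_nonneg.2 h)
    rwa [add_sub_cancel] at this
  linarith

lemma Xex_holder {α : ℝ} (hα : α ∈ Ioo (0:ℝ) 1) (a b : ℝ) :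
    |Xex α b - Xex α a| ≤ |b - a| ^ (1 - α) := by
  have hβ0 : (0:ℝ) ≤ 1 - α := by linarith [hα.2]
  have hβ1 : (1:ℝ) - α ≤ 1 := by linarith [hα.1]
  unfold Xex
  split_ifs with hb ha ha
  · exact le_trans (my_rpow_sub_abs hβ0 hβ1 (abs_nonneg _) (abs_nonneg _))
      (Real.rpow_le_rpow (abs_nonneg _) (abs_abs_sub_abs_le_abs_sub b a) hβ0)
  · push_neg at ha
    rw [sub_zero, abs_of_nonneg (Real.rpow_nonneg (abs_nonneg _) _)]
    apply Real.rpow_le_rpow (abs_nonneg _) _ hβ0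
    rw [abs_of_nonpos hb, abs_of_nonpos (by linarith : b - a ≤ 0)]
    linarith
  · push_neg at hb
    rw [zero_sub, abs_neg, abs_of_nonneg (Real.rpow_nonneg (abs_nonneg _) _)]
    apply Real.rpow_le_rpow (abs_nonneg _) _ hβ0
    rw [abs_of_nonpos ha, abs_of_nonneg (by linarith : (0:ℝ) ≤ b - a)]
    linarith
  · simpa using Real.rpow_nonneg (abs_nonneg (b - a)) (1 - α)

lemma ratio_le_two {α : ℝ} (hα : α ∈ Ioo (0:ℝ) 1) (t τ : ℝ) :
    ∀ c ∈ ratioSet (1 - α) (-1) 0 (fun s => Xex α (t + s) - Xex α (τ + s)), c ≤ 2 := by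
  rintro c ⟨s, u, _, hsu, _, rfl⟩
  have hpos : (0:ℝ) < (u - s) ^ (1 - α) := Real.rpow_pos_of_pos (sub_pos.2 hsu) _
  rw [div_le_iff₀ hpos]
  have h1 : |Xex α (t + u) - Xex α (t + s)| ≤ |u - s| ^ (1 - α) := by
    have := Xex_holder hα (t + s) (t + u)
    simpa [show t + u - (t + s) = u - s by ring] using this
  have h2 : |Xex α (τ + u) - Xex α (τ + s)| ≤ |u - s| ^ (1 - α) := by
    have := Xex_holder hα (τ + s) (τ + u)
    simpa [show τ + u - (τ + s) = u - s by ring] using this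
  rw [abs_of_pos (sub_pos.2 hsu)] at h1 h2
  have habs : ‖(fun s => Xex α (t + s) - Xex α (τ + s)) u -
      (fun s => Xex α (t + s) - Xex α (τ + s)) s‖ ≤
      |Xex α (t + u) - Xex α (t + s)| + |Xex α (τ + u) - Xex α (τ + s)| := by
    simp only [Real.norm_eq_abs]
    rw [show Xex α (t + u) - Xex α (τ + u) - (Xex α (t + s) - Xex α (τ + s)) =
      (Xex α (t + u) - Xex α (t + s)) - (Xex α (τ + u) - Xex α (τ + s)) by ring]
    exact abs_sub _ _
  linarith

lemma one_mem_ratio {α : ℝ} (hα : α ∈ Ioo (0:ℝ) 1) {t τ : ℝ} (ht0 : 0 ≤ t) (hτ1 : τ ≤ 1)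
    (hlt : t < τ) :
    (1:ℝ) ∈ ratioSet (1 - α) (-1) 0 (fun s => Xex α (t + s) - Xex α (τ + s)) := by
  have hβ : (1:ℝ) - α ≠ 0 := by have := hα.2; intro h; linarith [sub_eq_zero.mp h]
  refine ⟨-τ, -t, by linarith, by linarith, by linarith, ?_⟩
  have e1 : Xex α (t + -t) = 0 := by
    simp [Xex, Real.zero_rpow hβ]
  have e2 : Xex α (τ + -t) = 0 := by
    simp only [Xex, if_neg (by linarith : ¬ τ + -t ≤ 0)]
  have e3 : Xex α (τ + -τ) = 0 := by
    simp [Xex, Real.zero_rpow hβ]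
  have e4 : Xex α (t + -τ) = (τ - t) ^ (1 - α) := by
    simp only [Xex, if_pos (by linarith : t + -τ ≤ 0)]
    congr 1
    rw [abs_of_nonpos (by linarith : t + -τ ≤ 0)]
    ring
  simp only [e1, e2, e3, e4, sub_zero, zero_sub, Real.norm_eq_abs, abs_neg]
  rw [abs_of_nonneg (Real.rpow_nonneg (by linarith) _),
    show -t - -τ = τ - t by ring, div_self (ne_of_gt (Real.rpow_pos_of_pos (by linarith) _))]

theorem stmt10 (α : ℝ) (hα : α ∈ Ioo (0:ℝ) 1) :
    (∀ t τ : ℝ, t ∈ Icc (0:ℝ) 1 → τ ∈ Icc (0:ℝ) 1 → t ≠ τ →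
      1 ≤ hSemi (1 - α) (-1) 0 (fun s => Xex α (t + s) - Xex α (τ + s)) ∧
      hSemi (1 - α) (-1) 0 (fun s => Xex α (t + s) - Xex α (τ + s)) ≤
        hNorm (1 - α) (-1) 0 (fun s => Xex α (t + s) - Xex α (τ + s))) ∧
    ∀ τ ∈ Icc (0:ℝ) 1,
      ¬ Tendsto (fun t => hNorm (1 - α) (-1) 0 (fun s => Xex α (t + s) - Xex α (τ + s)))
          (nhdsWithin τ (Icc 0 1)) (nhds 0) := by
  have key : ∀ t τ : ℝ, t ∈ Icc (0:ℝ) 1 → τ ∈ Icc (0:ℝ) 1 → t ≠ τ →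
      1 ≤ hSemi (1 - α) (-1) 0 (fun s => Xex α (t + s) - Xex α (τ + s)) ∧
      hSemi (1 - α) (-1) 0 (fun s => Xex α (t + s) - Xex α (τ + s)) ≤
        hNorm (1 - α) (-1) 0 (fun s => Xex α (t + s) - Xex α (τ + s)) := by
    intro t τ ht hτ hne
    have hbdd : BddAbove (ratioSet (1 - α) (-1) 0 (fun s => Xex α (t + s) - Xex α (τ + s))) :=
      ⟨2, fun c hc => ratio_le_two hα t τ c hc⟩
    have hmem : (1:ℝ) ∈ ratioSet (1 - α) (-1) 0 (fun s => Xex α (t + s) - Xex α (τ + s)) := by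
      rcases hne.lt_or_gt with h | h
      · exact one_mem_ratio hα ht.1 hτ.2 h
      · obtain ⟨s, u, h1, h2, h3, h4⟩ := one_mem_ratio hα hτ.1 ht.2 h
        refine ⟨s, u, h1, h2, h3, h4.trans ?_⟩
        congr 1
        simp only [Real.norm_eq_abs]
        rw [show Xex α (τ + u) - Xex α (t + u) - (Xex α (τ + s) - Xex α (t + s)) =
          -(Xex α (t + u) - Xex α (τ + u) - (Xex α (t + s) - Xex α (τ + s))) by ring, abs_neg]
    constructor
    · exact le_csSup hbdd hmem
    · have h0 : 0 ≤ hSup (-1) 0 (fun s => Xex α (t + s) - Xex α (τ + s)) := by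
        apply Real.sSup_nonneg
        rintro x ⟨y, -, rfl⟩
        exact norm_nonneg _
      unfold hNorm
      linarith
  refine ⟨key, ?_⟩
  intro τ hτ h
  have hneb : (nhdsWithin τ (Icc 0 1 \ {τ})).NeBot := by
    rcases lt_or_eq_of_le hτ.2 with h1 | h1
    · refine (left_nhdsWithin_Ioc_neBot h1).mono (nhdsWithin_mono τ ?_)
      rintro x ⟨hx1, hx2⟩
      exact ⟨⟨by linarith [hτ.1], hx2⟩, hx1.ne'⟩
    · subst h1
      refine (right_nhdsWithin_Ico_neBot (show (0:ℝ) < 1 by norm_num)).mono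
        (nhdsWithin_mono 1 ?_)
      rintro x ⟨hx1, hx2⟩
      exact ⟨⟨hx1, hx2.le⟩, hx2.ne⟩
  have h' := h.mono_left (nhdsWithin_mono τ (diff_subset : Icc 0 1 \ {τ} ⊆ Icc 0 1))
  have hev : ∀ᶠ x in nhdsWithin τ (Icc 0 1 \ {τ}),
      hNorm (1 - α) (-1) 0 (fun s => Xex α (x + s) - Xex α (τ + s)) < 1 :=
    h'.eventually (eventually_lt_nhds zero_lt_one)
  have hmem : ∀ᶠ x in nhdsWithin τ (Icc 0 1 \ {τ}), x ∈ Icc (0:ℝ) 1 \ {τ} :=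
    self_mem_nhdsWithin
  obtain ⟨x, hx1, hx2⟩ := (hev.and hmem).exists
  obtain ⟨k1, k2⟩ := key x τ hx2.1 hτ hx2.2
  linarith

end
end
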